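/- arXiv:2505.22422 — 2 statements merged into one kernel-verified Lean document; each statement's English description precedes it below -/
import Mathlib

section
/- Let X_1, ..., X_n be real-valued random variables forming a martingale difference sequence with X_i ≤ b almost surely for all i (i.e., E[X_i | X_1, ..., X_{i-1}] = 0), and let nV = Σ_{i=1}^n Var(X_i | X_1, ..., X_{i-1}). Then for any δ ∈ (0,1), with probability at least 1 - δ, simultaneously for all 1 ≤ t ≤ n: Σ_{i=1}^t X_i ≤ sqrt(2·n·V·log(1/δ)) + (b/3)·log(1/δ). -/
/-!
For `0 ≤ λ` with `λ b < 3`, Bernstein's bound `eᵘ ≤ 1 + u + u² / (2 (1 - u / 3))` (valid for every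
`u < 3`) at `u = λ X_i ≤ λ b` gives `E[exp (λ X_i) | 𝓕_{i-1}] ≤ exp (ψ E[X_i² | 𝓕_{i-1}])`, where
`ψ = λ² / (2 (1 - λ b / 3))`. So `exp (λ S_t - ψ ⟨S⟩_t)`, with `⟨S⟩_t` the sum of the first `t`
conditional variances, is a nonnegative supermartingale started at `1`. Ville's maximal
inequality (optional stopping at the first time it reaches `1 / δ`) keeps it below `1 / δ` up to
time `n` with probability at least `1 - δ`; there `λ S_t < ψ nV + log (1 / δ)` for all `t ≤ n`,
and `λ = 1 / (√(nV / (2 log (1 / δ))) + b / 3)` gives the stated bound. When `nV = 0` all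
conditional variances vanish, and with them the `X_i`.
-/

open MeasureTheory Filter Finset Real

lemma one_sub_div_three_mul_exp_sub_one_sub_le (u : ℝ) :
    (1 - u / 3) * (exp u - 1 - u) ≤ u ^ 2 / 2 := by
  set h : ℝ → ℝ := fun x => x ^ 2 / 2 - (1 - x / 3) * (exp x - 1 - x)
  set h' : ℝ → ℝ := fun x => x + (exp x - 1 - x) / 3 - (1 - x / 3) * (exp x - 1)
  have hA (x : ℝ) : HasDerivAt (fun y => 1 - y / 3) (-(1 / 3)) x :=
    ((hasDerivAt_id x).div_const 3).const_sub 1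
  have hE (x : ℝ) : HasDerivAt (fun y => exp y - 1 - y) (exp x - 1) x :=
    ((hasDerivAt_exp x).sub_const 1).sub (hasDerivAt_id x)
  have hh (x : ℝ) : HasDerivAt h (h' x) x := by
    refine (((hasDerivAt_pow 2 x).div_const 2).sub ((hA x).mul (hE x))).congr_deriv ?_
    simp only [h']; push_cast; ring
  have hh' (x : ℝ) : HasDerivAt h' ((1 - (1 - x) * exp x) / 3) x := by
    refine (((hasDerivAt_id x).add ((hE x).div_const 3)).sub
      ((hA x).mul ((hasDerivAt_exp x).sub_const 1))).congr_deriv ?_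
    ring
  have hh'_mono : Monotone h' := by
    refine monotone_of_deriv_nonneg (fun x => (hh' x).differentiableAt) fun x => ?_
    have : (1 - x) * exp x ≤ 1 :=
      calc (1 - x) * exp x ≤ exp (-x) * exp x := by gcongr; linarith [add_one_le_exp (-x)]
        _ = 1 := by rw [← exp_add, neg_add_cancel, exp_zero]
    rw [(hh' x).deriv]
    linarith
  have hconv : ConvexOn ℝ Set.univ h := by
    refine Monotone.convexOn_univ_of_deriv (fun x => (hh x).differentiableAt) ?_
    rwa [show deriv h = h' from funext fun x => (hh x).deriv]
  have hmin : IsMinOn h Set.univ 0 := by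
    refine hconv.isMinOn_of_rightDeriv_eq_zero (by simp) ?_
    rw [(hh 0).hasDerivWithinAt.derivWithin (uniqueDiffWithinAt_Ioi 0)]
    simp [h']
  have := hmin (Set.mem_univ u)
  norm_num [h] at this
  linarith

lemma exp_le_one_add_add_sq_div {u : ℝ} (hu : u < 3) :
    exp u ≤ 1 + u + u ^ 2 / (2 * (1 - u / 3)) := by
  have key : exp u - 1 - u ≤ u ^ 2 / (2 * (1 - u / 3)) := by
    rw [le_div_iff₀ (by linarith)]
    linarith [one_sub_div_three_mul_exp_sub_one_sub_le u]
  linarith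

noncomputable def bernsteinRate (lam b : ℝ) : ℝ := lam ^ 2 / (2 * (1 - lam * b / 3))

lemma bernsteinRate_nonneg {lam b : ℝ} (hlb : lam * b < 3) : 0 ≤ bernsteinRate lam b :=
  div_nonneg (sq_nonneg lam) (by linarith)

lemma exp_mul_le_one_add_add_bernsteinRate_mul_sq {lam b x : ℝ} (hlam : 0 ≤ lam)
    (hlb : lam * b < 3) (hx : x ≤ b) :
    exp (lam * x) ≤ 1 + lam * x + bernsteinRate lam b * x ^ 2 := by
  have hlx : lam * x ≤ lam * b := mul_le_mul_of_nonneg_left hx hlam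
  calc exp (lam * x) ≤ 1 + lam * x + (lam * x) ^ 2 / (2 * (1 - lam * x / 3)) :=
        exp_le_one_add_add_sq_div (hlx.trans_lt hlb)
    _ ≤ 1 + lam * x + bernsteinRate lam b * x ^ 2 := by
        rw [bernsteinRate, div_mul_eq_mul_div, mul_pow]
        gcongr
        linarith

lemma lt_sqrt_add_of_inv_mul_lt {v L b s : ℝ} (hv : 0 < v) (hL : 0 < L) (hb : 0 ≤ b)
    (h : (√(v / (2 * L)) + b / 3)⁻¹ * s <
      bernsteinRate (√(v / (2 * L)) + b / 3)⁻¹ b * v + L) :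
    s < √(2 * v * L) + b / 3 * L := by
  set r := √(v / (2 * L)) with hr
  have hr0 : 0 < r := sqrt_pos.2 (by positivity)
  have hv_eq : v = 2 * L * r ^ 2 := by
    rw [hr, sq_sqrt (by positivity)]; field_simp
  have hsqrt : √(2 * v * L) = 2 * L * r := by
    rw [show 2 * v * L = (2 * L * r) ^ 2 by rw [hv_eq]; ring, sqrt_sq (by positivity)]
  have hrate : bernsteinRate (r + b / 3)⁻¹ b = (r + b / 3)⁻¹ / (2 * r) := by
    rw [bernsteinRate]; field_simp; ring
  rw [hrate, hv_eq] at h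
  rw [hsqrt]
  have hpos : 0 < r + b / 3 := by positivity
  rw [← mul_lt_mul_iff_right₀ (inv_pos.2 hpos)]
  calc (r + b / 3)⁻¹ * s < (r + b / 3)⁻¹ / (2 * r) * (2 * L * r ^ 2) + L := h
    _ = _ := by field_simp; ring

section CondExp

variable {Ω : Type*} {m m0 : MeasurableSpace Ω} {μ : Measure Ω}

lemma ae_eq_zero_of_condExp_sq_ae_eq_zero {Y : Ω → ℝ} (hm : m ≤ m0) [SigmaFinite (μ.trim hm)]
    (hY : Integrable (fun ω => Y ω ^ 2) μ) (h : μ[fun ω => Y ω ^ 2 | m] =ᵐ[μ] 0) :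
    Y =ᵐ[μ] 0 := by
  have hint : ∫ ω, Y ω ^ 2 ∂μ = 0 := by
    rw [← integral_condExp hm, integral_congr_ae h]
    simp
  filter_upwards [(integral_eq_zero_iff_of_nonneg (fun ω => sq_nonneg (Y ω)) hY).1 hint]
    with ω hω
  exact pow_eq_zero_iff two_ne_zero |>.1 hω

lemma integrable_exp_mul_of_le [IsFiniteMeasure μ] {Y : Ω → ℝ} {lam b : ℝ} (hlam : 0 ≤ lam)
    (hY : AEStronglyMeasurable Y μ) (hbdd : ∀ᵐ ω ∂μ, Y ω ≤ b) :
    Integrable (fun ω => exp (lam * Y ω)) μ := by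
  refine (integrable_const (exp (lam * b))).mono'
    (continuous_exp.comp_aestronglyMeasurable (hY.const_mul lam)) ?_
  filter_upwards [hbdd] with ω hω
  rw [norm_of_nonneg (exp_pos _).le]
  gcongr

lemma condExp_exp_mul_le [IsFiniteMeasure μ] {Y : Ω → ℝ} {lam b : ℝ} (hm : m ≤ m0)
    (hlam : 0 ≤ lam) (hlb : lam * b < 3) (hint : Integrable Y μ)
    (hsq : Integrable (fun ω => Y ω ^ 2) μ) (hbdd : ∀ᵐ ω ∂μ, Y ω ≤ b) (hmds : μ[Y | m] =ᵐ[μ] 0) :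
    μ[fun ω => exp (lam * Y ω) | m]
      ≤ᵐ[μ] fun ω => exp (bernsteinRate lam b * μ[fun ω => Y ω ^ 2 | m] ω) := by
  set c := bernsteinRate lam b
  have hlin_int : Integrable (fun ω => 1 + lam * Y ω) μ :=
    (integrable_const 1).add (hint.const_mul lam)
  have hpoly_int : Integrable (fun ω => 1 + lam * Y ω + c * Y ω ^ 2) μ :=
    hlin_int.add (hsq.const_mul c)
  have hle := condExp_mono (m := m) (integrable_exp_mul_of_le hlam hint.aestronglyMeasurable hbdd)
    hpoly_int (by filter_upwards [hbdd] with ω hω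
                  using exp_mul_le_one_add_add_bernsteinRate_mul_sq hlam hlb hω)
  have hpoly : μ[fun ω => 1 + lam * Y ω + c * Y ω ^ 2 | m]
      =ᵐ[μ] fun ω => 1 + lam * μ[Y | m] ω + c * μ[fun ω => Y ω ^ 2 | m] ω := by
    have h1 : μ[fun ω => 1 + lam * Y ω + c * Y ω ^ 2 | m]
        =ᵐ[μ] μ[fun ω => 1 + lam * Y ω | m] + μ[fun ω => c * Y ω ^ 2 | m] :=
      condExp_add hlin_int (hsq.const_mul c) m
    have h2 : μ[fun ω => 1 + lam * Y ω | m]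
        =ᵐ[μ] μ[fun _ => (1 : ℝ) | m] + μ[fun ω => lam * Y ω | m] :=
      condExp_add (integrable_const 1) (hint.const_mul lam) m
    have h3 : μ[fun ω => lam * Y ω | m] =ᵐ[μ] lam • μ[Y | m] := condExp_smul lam Y m
    have h4 : μ[fun ω => c * Y ω ^ 2 | m] =ᵐ[μ] c • μ[fun ω => Y ω ^ 2 | m] :=
      condExp_smul c (fun ω => Y ω ^ 2) m
    filter_upwards [h1, h2, h3, h4] with ω h1 h2 h3 h4
    rw [h1, Pi.add_apply, h2, Pi.add_apply, condExp_const hm, h3, h4]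
    rfl
  filter_upwards [hle, hpoly, hmds] with ω hle hpoly hmds
  rw [hpoly, hmds] at hle
  simp only [Pi.zero_apply, mul_zero, add_zero] at hle
  linarith [add_one_le_exp (c * μ[fun ω => Y ω ^ 2 | m] ω)]

end CondExp

section Freedman

variable {Ω : Type*} {m0 : MeasurableSpace Ω} {μ : Measure Ω} {𝒢 : Filtration ℕ m0}
  {X : ℕ → Ω → ℝ} {n : ℕ} {b lam : ℝ}

noncomputable def predictableQuadVar (μ : Measure Ω) (𝒢 : Filtration ℕ m0) (X : ℕ → Ω → ℝ)
    (t : ℕ) (ω : Ω) : ℝ :=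
  ∑ i ∈ Icc 1 t, μ[fun ω => X i ω ^ 2 | 𝒢 (i - 1)] ω

noncomputable def freedmanProcess (μ : Measure Ω) (𝒢 : Filtration ℕ m0) (X : ℕ → Ω → ℝ)
    (lam c : ℝ) (t : ℕ) (ω : Ω) : ℝ :=
  exp (lam * ∑ i ∈ Icc 1 t, X i ω - c * predictableQuadVar μ 𝒢 X t ω)

structure IsMartingaleDiffBddAbove (μ : Measure Ω) (𝒢 : Filtration ℕ m0) (X : ℕ → Ω → ℝ)
    (n : ℕ) (b : ℝ) : Prop where
  stronglyMeasurable : ∀ i ∈ Icc 1 n, StronglyMeasurable[𝒢 i] (X i)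
  integrable : ∀ i ∈ Icc 1 n, Integrable (X i) μ
  integrable_sq : ∀ i ∈ Icc 1 n, Integrable (fun ω => X i ω ^ 2) μ
  ae_le : ∀ i ∈ Icc 1 n, ∀ᵐ ω ∂μ, X i ω ≤ b
  condExp_ae_eq_zero : ∀ i ∈ Icc 1 n, μ[X i | 𝒢 (i - 1)] =ᵐ[μ] 0

lemma predictableQuadVar_succ (t : ℕ) (ω : Ω) :
    predictableQuadVar μ 𝒢 X (t + 1) ω =
      predictableQuadVar μ 𝒢 X t ω + μ[fun ω => X (t + 1) ω ^ 2 | 𝒢 t] ω := by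
  rw [predictableQuadVar, predictableQuadVar, sum_Icc_succ_top (by omega), Nat.add_sub_cancel]

lemma ae_forall_condExp_sq_nonneg :
    ∀ᵐ ω ∂μ, ∀ i, 0 ≤ μ[fun ω => X i ω ^ 2 | 𝒢 (i - 1)] ω :=
  ae_all_iff.2 fun _ => condExp_nonneg (ae_of_all _ fun _ => sq_nonneg _)

lemma ae_monotone_predictableQuadVar :
    ∀ᵐ ω ∂μ, Monotone fun t => predictableQuadVar μ 𝒢 X t ω := by
  filter_upwards [ae_forall_condExp_sq_nonneg] with ω hω
  refine monotone_nat_of_le_succ fun t => ?_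
  rw [predictableQuadVar_succ]
  simpa using hω (t + 1)

lemma ae_predictableQuadVar_nonneg (t : ℕ) : ∀ᵐ ω ∂μ, 0 ≤ predictableQuadVar μ 𝒢 X t ω := by
  filter_upwards [ae_monotone_predictableQuadVar] with ω hω
  simpa [predictableQuadVar] using hω (Nat.zero_le t)

lemma stronglyMeasurable_predictableQuadVar (t : ℕ) :
    StronglyMeasurable[𝒢 t] (predictableQuadVar μ 𝒢 X t) :=
  Finset.stronglyMeasurable_fun_sum _ fun i hi =>
    stronglyMeasurable_condExp.mono (𝒢.mono ((Nat.sub_le i 1).trans (mem_Icc.1 hi).2))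

lemma freedmanProcess_succ (lam c : ℝ) (t : ℕ) (ω : Ω) :
    freedmanProcess μ 𝒢 X lam c (t + 1) ω =
      freedmanProcess μ 𝒢 X lam c t ω * exp (-(c * μ[fun ω => X (t + 1) ω ^ 2 | 𝒢 t] ω)) *
        exp (lam * X (t + 1) ω) := by
  rw [freedmanProcess, freedmanProcess, predictableQuadVar_succ, sum_Icc_succ_top (by omega),
    ← exp_add, ← exp_add]
  ring_nf

lemma stronglyMeasurable_freedmanProcess
    (hX : ∀ i ∈ Icc 1 n, StronglyMeasurable[𝒢 i] (X i)) (lam c : ℝ) {t : ℕ} (ht : t ≤ n) :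
    StronglyMeasurable[𝒢 t] (freedmanProcess μ 𝒢 X lam c t) := by
  have hS : StronglyMeasurable[𝒢 t] fun ω => ∑ i ∈ Icc 1 t, X i ω :=
    Finset.stronglyMeasurable_fun_sum _ fun i hi =>
      (hX i (Icc_subset_Icc_right ht hi)).mono (𝒢.mono (mem_Icc.1 hi).2)
  exact continuous_exp.comp_stronglyMeasurable
    ((hS.const_mul lam).sub ((stronglyMeasurable_predictableQuadVar t).const_mul c))

lemma integrable_freedmanProcess [IsFiniteMeasure μ] {c : ℝ}
    (hX : ∀ i ∈ Icc 1 n, StronglyMeasurable[𝒢 i] (X i))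
    (hbdd : ∀ i ∈ Icc 1 n, ∀ᵐ ω ∂μ, X i ω ≤ b) (hlam : 0 ≤ lam) (hc : 0 ≤ c) {t : ℕ}
    (ht : t ≤ n) : Integrable (freedmanProcess μ 𝒢 X lam c t) μ := by
  refine (integrable_const (exp (lam * (t * b)))).mono'
    ((stronglyMeasurable_freedmanProcess hX lam c ht).mono (𝒢.le t)).aestronglyMeasurable ?_
  have hbdd' : ∀ᵐ ω ∂μ, ∀ i ∈ Icc 1 t, X i ω ≤ b :=
    (eventually_all_finset _).2 fun i hi => hbdd i (Icc_subset_Icc_right ht hi)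
  filter_upwards [hbdd', ae_predictableQuadVar_nonneg (𝒢 := 𝒢) (X := X) t] with ω hXω hQ
  have hS : ∑ i ∈ Icc 1 t, X i ω ≤ t * b := by
    simpa using sum_le_card_nsmul _ _ _ hXω
  rw [freedmanProcess, norm_of_nonneg (exp_pos _).le]
  gcongr
  nlinarith

lemma condExp_freedmanProcess_succ_le [IsFiniteMeasure μ]
    (hX : IsMartingaleDiffBddAbove μ 𝒢 X n b) (hlam : 0 ≤ lam) (hlb : lam * b < 3)
    {t : ℕ} (ht : t + 1 ≤ n) :
    μ[freedmanProcess μ 𝒢 X lam (bernsteinRate lam b) (t + 1) | 𝒢 t]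
      ≤ᵐ[μ] freedmanProcess μ 𝒢 X lam (bernsteinRate lam b) t := by
  set c := bernsteinRate lam b
  set q := μ[fun ω => X (t + 1) ω ^ 2 | 𝒢 t]
  set G : Ω → ℝ := fun ω => freedmanProcess μ 𝒢 X lam c t ω * exp (-(c * q ω))
  have hmem : t + 1 ∈ Icc 1 n := mem_Icc.2 ⟨by omega, ht⟩
  have hG : StronglyMeasurable[𝒢 t] G :=
    (stronglyMeasurable_freedmanProcess hX.stronglyMeasurable lam c (by omega)).mul
      (continuous_exp.comp_stronglyMeasurable (stronglyMeasurable_condExp.const_mul c).neg)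
  have hsplit : freedmanProcess μ 𝒢 X lam c (t + 1) = G * fun ω => exp (lam * X (t + 1) ω) :=
    funext (freedmanProcess_succ lam c t)
  have hpull := condExp_mul_of_stronglyMeasurable_left hG
    (hsplit ▸ integrable_freedmanProcess hX.stronglyMeasurable hX.ae_le hlam
      (bernsteinRate_nonneg hlb) ht)
    (integrable_exp_mul_of_le hlam (hX.integrable _ hmem).aestronglyMeasurable (hX.ae_le _ hmem))
  have hmgf := condExp_exp_mul_le (𝒢.le t) hlam hlb (hX.integrable _ hmem)
    (hX.integrable_sq _ hmem) (hX.ae_le _ hmem) (by simpa using hX.condExp_ae_eq_zero _ hmem)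
  rw [hsplit]
  filter_upwards [hpull, hmgf] with ω hpull hmgf
  rw [hpull, Pi.mul_apply]
  calc G ω * μ[fun ω => exp (lam * X (t + 1) ω) | 𝒢 t] ω ≤ G ω * exp (c * q ω) :=
        mul_le_mul_of_nonneg_left hmgf (mul_pos (exp_pos _) (exp_pos _)).le
    _ = freedmanProcess μ 𝒢 X lam c t ω := by
        rw [mul_assoc, ← exp_add, neg_add_cancel, exp_zero, mul_one]

lemma freedmanProcess_zero (lam c : ℝ) : freedmanProcess μ 𝒢 X lam c 0 = 1 := by
  ext
  simp [freedmanProcess, predictableQuadVar]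

lemma supermartingale_freedmanProcess_min [IsFiniteMeasure μ]
    (hX : IsMartingaleDiffBddAbove μ 𝒢 X n b) (hlam : 0 ≤ lam) (hlb : lam * b < 3) :
    Supermartingale (fun t => freedmanProcess μ 𝒢 X lam (bernsteinRate lam b) (min t n)) 𝒢 μ := by
  have hmeas {t : ℕ} (ht : t ≤ n) := stronglyMeasurable_freedmanProcess (μ := μ)
    hX.stronglyMeasurable lam (bernsteinRate lam b) ht
  have hint {t : ℕ} (ht : t ≤ n) := integrable_freedmanProcess hX.stronglyMeasurable hX.ae_le
    hlam (bernsteinRate_nonneg hlb) ht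
  refine supermartingale_nat (fun t => (hmeas (min_le_right t n)).mono (𝒢.mono (min_le_left t n)))
    (fun t => hint (min_le_right t n)) fun t => ?_
  rcases lt_or_ge t n with ht | ht
  · simp only [min_eq_left ht.le, min_eq_left (Nat.succ_le_of_lt ht)]
    exact condExp_freedmanProcess_succ_le hX hlam hlb ht
  · simp only [min_eq_right ht, min_eq_right (Nat.le_succ_of_le ht)]
    rw [condExp_of_stronglyMeasurable (𝒢.le t) ((hmeas le_rfl).mono (𝒢.mono ht)) (hint le_rfl)]

lemma Supermartingale.mul_measureReal_exists_ge_le [IsFiniteMeasure μ] {f : ℕ → Ω → ℝ}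
    (hf : Supermartingale f 𝒢 μ) (hnonneg : 0 ≤ f) {ε : ℝ} (hε : 0 ≤ ε) (n : ℕ) :
    ε * μ.real {ω | ∃ k ≤ n, ε ≤ f k ω} ≤ ∫ ω, f 0 ω ∂μ := by
  set τ : Ω → ℕ∞ := fun ω => (hittingBtwn f (Set.Ici ε) 0 n ω : ℕ)
  have hτ : IsStoppingTime 𝒢 τ :=
    hf.stronglyAdapted.adapted.isStoppingTime_hittingBtwn measurableSet_Ici
  have hτn : ∀ ω, τ ω ≤ n := fun ω => WithTop.coe_le_coe.2 (hittingBtwn_le ω)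
  have hint : Integrable (stoppedValue f τ) μ := integrable_stoppedValue ℕ hτ hf.integrable hτn
  calc ε * μ.real {ω | ∃ k ≤ n, ε ≤ f k ω}
      ≤ ε * μ.real {ω | ε ≤ stoppedValue f τ ω} :=
        mul_le_mul_of_nonneg_left (measureReal_mono fun ω ⟨k, hk, hfk⟩ =>
          stoppedValue_hittingBtwn_mem ⟨k, ⟨Nat.zero_le k, hk⟩, hfk⟩) hε
    _ ≤ ∫ ω, stoppedValue f τ ω ∂μ :=
        mul_meas_ge_le_integral_of_nonneg (ae_of_all _ fun ω => hnonneg _ _) hint ε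
    _ ≤ ∫ ω, f 0 ω ∂μ := by
        have := hf.neg.expected_stoppedValue_mono (isStoppingTime_const 𝒢 0) hτ
          (fun ω => WithTop.coe_le_coe.2 (Nat.zero_le _)) hτn
        simpa [stoppedValue, integral_neg] using this

lemma measureReal_exists_freedman_ge_le [IsProbabilityMeasure μ]
    (hX : IsMartingaleDiffBddAbove μ 𝒢 X n b) (hlam : 0 ≤ lam) (hlb : lam * b < 3)
    (L : ℝ) :
    μ.real {ω | ∃ t ≤ n, L ≤ lam * ∑ i ∈ Icc 1 t, X i ω -
      bernsteinRate lam b * predictableQuadVar μ 𝒢 X t ω} ≤ exp (-L) := by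
  have hville := Supermartingale.mul_measureReal_exists_ge_le
    (supermartingale_freedmanProcess_min hX hlam hlb)
    (fun _ _ => (exp_pos _).le) (exp_pos L).le n
  rw [Nat.zero_min, freedmanProcess_zero] at hville
  simp only [Pi.one_apply, integral_const, probReal_univ, smul_eq_mul, mul_one] at hville
  refine le_of_mul_le_mul_left ?_ (exp_pos L)
  rw [← exp_add, add_neg_cancel, exp_zero]
  refine le_trans (mul_le_mul_of_nonneg_left (measureReal_mono ?_) (exp_pos L).le) hville
  rintro ω ⟨t, ht, h⟩
  exact ⟨t, ht, by rw [Nat.min_eq_left ht, freedmanProcess]; exact exp_le_exp.2 h⟩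

lemma ae_forall_eq_zero_of_predictableQuadVar_nonpos [IsFiniteMeasure μ]
    (hsq : ∀ i ∈ Icc 1 n, Integrable (fun ω => X i ω ^ 2) μ)
    (hvar : ∀ᵐ ω ∂μ, predictableQuadVar μ 𝒢 X n ω ≤ 0) : ∀ᵐ ω ∂μ, ∀ i ∈ Icc 1 n, X i ω = 0 := by
  refine (eventually_all_finset _).2 fun i hi =>
    ae_eq_zero_of_condExp_sq_ae_eq_zero (𝒢.le (i - 1)) (hsq i hi) ?_
  filter_upwards [hvar, ae_forall_condExp_sq_nonneg (𝒢 := 𝒢) (X := X)] with ω hvar hnonneg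
  exact le_antisymm ((single_le_sum (fun j _ => hnonneg j) hi).trans hvar) (hnonneg i)

theorem one_sub_le_measure_forall_sum_le [IsProbabilityMeasure μ] {v δ : ℝ} (hb : 0 ≤ b)
    (hX : IsMartingaleDiffBddAbove μ 𝒢 X n b)
    (hvar : ∀ᵐ ω ∂μ, predictableQuadVar μ 𝒢 X n ω ≤ v) (hδ : 0 < δ) (hδ1 : δ < 1) :
    1 - ENNReal.ofReal δ ≤ μ {ω | ∀ t ∈ Icc 1 n,
      ∑ i ∈ Icc 1 t, X i ω ≤ √(2 * v * log (1 / δ)) + b / 3 * log (1 / δ)} := by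
  set L := log (1 / δ)
  have hL : 0 < L := log_pos (one_lt_one_div hδ hδ1)
  have hv : 0 ≤ v := by
    obtain ⟨ω, hQ, hvω⟩ := (ae_predictableQuadVar_nonneg (μ := μ) n |>.and hvar).exists
    exact hQ.trans hvω
  rcases hv.eq_or_lt with rfl | hv
  · refine tsub_le_self.trans ?_
    rw [← measure_univ (μ := μ)]
    refine measure_mono_ae ?_
    filter_upwards [ae_forall_eq_zero_of_predictableQuadVar_nonpos hX.integrable_sq hvar]
      with ω hω _ t ht
    rw [sum_eq_zero fun i hi => hω i (Icc_subset_Icc_right (mem_Icc.1 ht).2 hi)]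
    positivity
  set lam := (√(v / (2 * L)) + b / 3)⁻¹
  have hr : 0 < √(v / (2 * L)) := sqrt_pos.2 (by positivity)
  have hlam : 0 < lam := by positivity
  have hlb : lam * b < 3 := by
    rw [inv_mul_lt_iff₀ (by positivity)]
    linarith
  set B := {ω | ∃ t ≤ n, L ≤ lam * ∑ i ∈ Icc 1 t, X i ω -
    bernsteinRate lam b * predictableQuadVar μ 𝒢 X t ω}
  have hB : μ B ≤ ENNReal.ofReal δ := by
    rw [← ofReal_measureReal]
    refine ENNReal.ofReal_le_ofReal
      ((measureReal_exists_freedman_ge_le hX hlam.le hlb L).trans_eq ?_)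
    rw [exp_neg, exp_log (by positivity), one_div, inv_inv]
  calc 1 - ENNReal.ofReal δ ≤ μ Bᶜ := by
        rw [tsub_le_iff_right, ← measure_univ (μ := μ)]
        exact (measure_univ_le_add_compl B).trans (by rw [add_comm]; gcongr)
    _ ≤ _ := by
        refine measure_mono_ae ?_
        filter_upwards [ae_monotone_predictableQuadVar, hvar] with ω hQ hvω hωB t ht
        have hlt : lam * ∑ i ∈ Icc 1 t, X i ω < bernsteinRate lam b * v + L := by
          have hnotB : ¬ L ≤ lam * ∑ i ∈ Icc 1 t, X i ω -
              bernsteinRate lam b * predictableQuadVar μ 𝒢 X t ω :=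
            fun h => hωB ⟨t, (mem_Icc.1 ht).2, h⟩
          have hQt := (hQ (mem_Icc.1 ht).2).trans hvω
          nlinarith [bernsteinRate_nonneg hlb]
        exact (lt_sqrt_add_of_inv_mul_lt hv hL hb hlt).le

end Freedman

noncomputable def incrementFiltration {Ω : Type*} [m0 : MeasurableSpace Ω] (X : ℕ → Ω → ℝ)
    (hX : ∀ i, Measurable (X i)) : Filtration ℕ m0 where
  seq k := ⨆ j ∈ Icc 1 k, MeasurableSpace.comap (X j) inferInstance
  mono' _ _ hkl := biSup_mono fun _ hj => Icc_subset_Icc_right hkl hj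
  le' _ := iSup₂_le fun j _ => measurable_iff_comap_le.1 (hX j)

theorem time_uniform_freedman
    {Ω : Type*} [MeasurableSpace Ω] (μ : Measure Ω) [IsProbabilityMeasure μ]
    (n : ℕ) (X : ℕ → Ω → ℝ) (b V : ℝ) (hb : 0 < b)
    (hmeas : ∀ i, Measurable (X i))
    (hint : ∀ i, Integrable (X i) μ) (hsq_int : ∀ i, Integrable (fun ω => (X i ω)^2) μ)
    (hbdd : ∀ i ∈ Finset.Icc 1 n, ∀ᵐ ω ∂μ, X i ω ≤ b)
    (hmds : ∀ i ∈ Finset.Icc 1 n,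
      μ[X i | ⨆ j ∈ Finset.Icc 1 (i-1), MeasurableSpace.comap (X j) inferInstance]
        =ᵐ[μ] fun _ => (0:ℝ))
    (hvar : ∀ᵐ ω ∂μ, ∑ i ∈ Finset.Icc 1 n,
      (μ[fun ω' => (X i ω')^2 |
          ⨆ j ∈ Finset.Icc 1 (i-1), MeasurableSpace.comap (X j) inferInstance]) ω
        ≤ (n : ℝ) * V)
    (δ : ℝ) (hδ : 0 < δ) (hδ1 : δ < 1) :
    1 - ENNReal.ofReal δ ≤
      μ {ω | ∀ t ∈ Finset.Icc 1 n,
        ∑ i ∈ Finset.Icc 1 t, X i ω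
          ≤ Real.sqrt (2 * n * V * Real.log (1/δ)) + b/3 * Real.log (1/δ)} := by
  have hX : IsMartingaleDiffBddAbove μ (incrementFiltration X hmeas) X n b :=
    { stronglyMeasurable := fun i hi => (measurable_iff_comap_le.2
        (le_biSup (fun j => MeasurableSpace.comap (X j) inferInstance)
          (right_mem_Icc.2 (mem_Icc.1 hi).1))).stronglyMeasurable
      integrable := fun i _ => hint i
      integrable_sq := fun i _ => hsq_int i
      ae_le := hbdd
      condExp_ae_eq_zero := hmds }
  simpa only [mul_assoc] using one_sub_le_measure_forall_sum_le hb.le hX hvar hδ hδ1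
end

section
/- Let X_1, ..., X_n ∈ [0,1] be i.i.d. with variance σ², and let δ ∈ (0,1). Then with probability at least 1 - δ, simultaneously for all 1 ≤ t ≤ n: |Σ_{i=1}^t (X_i - E[X])| ≤ sqrt(2·n·σ²·log(2/δ)) + (1/3)·log(2/δ). -/
/-!
Centre the variables: `Y i = X i - 𝔼[X 1]` takes values in `[-1, 1]` and has variance `σ²`.
On `[-1, 1]`, `exp (l y) ≤ 1 + l y + y² (exp l - 1 - l)` for `l ≥ 0`, which gives Bennett's bound
`𝔼[exp (l Y)] ≤ exp (σ² (exp l - 1 - l))`. For the partial sums `S_t` of `Y`, `exp (l S_t)` is a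
nonnegative submartingale, so Doob's maximal inequality bounds `P(∃ t ≤ n, S_t > b)` by
`exp (-l b + n σ² (exp l - 1 - l))`. With `exp l - 1 - l ≤ l² / (2 (1 - l / 3))` and Bernstein's
choice of `l`, this is `δ / 2` for `b = √(2 n σ² log (2/δ)) + log (2/δ) / 3`; the same bound for
`-Y` and a union bound finish.
-/

open MeasureTheory ProbabilityTheory Real Finset
open scoped Nat

lemma two_mul_three_pow_le_factorial (k : ℕ) : 2 * 3 ^ k ≤ (k + 2)! := by
  induction k with
  | zero => decide
  | succ k ih =>
    rw [Nat.factorial_succ, pow_succ]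
    nlinarith

lemma hasSum_exp_sub_one_sub (x : ℝ) :
    HasSum (fun k : ℕ => x ^ (k + 2) / (k + 2)!) (exp x - 1 - x) := by
  have h := (hasSum_nat_add_iff' 2).2 (Real.exp_eq_exp_ℝ ▸ NormedSpace.expSeries_div_hasSum_exp x)
  simpa [sum_range_succ, sub_sub] using h

lemma exp_mul_le_of_abs_le_one {l y : ℝ} (hl : 0 ≤ l) (hy : |y| ≤ 1) :
    exp (l * y) ≤ 1 + l * y + y ^ 2 * (exp l - 1 - l) := by
  have hterm (k : ℕ) : (l * y) ^ (k + 2) / (k + 2)! ≤ y ^ 2 * (l ^ (k + 2) / (k + 2)!) := by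
    have hy2 : y ^ (k + 2) ≤ y ^ 2 :=
      calc y ^ (k + 2) ≤ |y| ^ (k + 2) := by rw [← abs_pow]; exact le_abs_self _
        _ ≤ |y| ^ 2 := pow_le_pow_of_le_one (abs_nonneg y) hy (by omega)
        _ = y ^ 2 := sq_abs y
    rw [mul_div_assoc', mul_comm (y ^ 2), mul_pow]
    exact div_le_div_of_nonneg_right (mul_le_mul_of_nonneg_left hy2 (by positivity))
      (by positivity)
  have := hasSum_le hterm (hasSum_exp_sub_one_sub (l * y)) ((hasSum_exp_sub_one_sub l).mul_left _)
  linarith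

lemma exp_sub_one_sub_le {l : ℝ} (hl : 0 ≤ l) (hl3 : l < 3) :
    exp l - 1 - l ≤ l ^ 2 / 2 * (1 - l / 3)⁻¹ := by
  have hterm (k : ℕ) : l ^ (k + 2) / (k + 2)! ≤ l ^ 2 / 2 * (l / 3) ^ k := by
    have hfact : (2 * 3 ^ k : ℝ) ≤ (k + 2)! := by exact_mod_cast two_mul_three_pow_le_factorial k
    rw [div_le_iff₀ (by positivity), div_pow]
    calc l ^ (k + 2) = l ^ 2 / 2 * (l ^ k / 3 ^ k) * (2 * 3 ^ k) := by field_simp; ring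
      _ ≤ _ := by gcongr
  exact hasSum_le hterm (hasSum_exp_sub_one_sub l)
    ((hasSum_geometric_of_lt_one (by positivity) (by linarith)).mul_left _)

lemma exists_bennett_exponent {v L : ℝ} (hv : 0 ≤ v) (hL : 0 < L) :
    ∃ l, 0 ≤ l ∧ v * (exp l - 1 - l) ≤ l * (√(2 * v * L) + 1 / 3 * L) - L := by
  rcases hv.eq_or_lt with rfl | hv
  · exact ⟨3, by norm_num, by simp⟩
  set q := √(2 * v * L)
  have hq : q ^ 2 = 2 * v * L := sq_sqrt (by positivity)
  have hq0 : 0 ≤ q := sqrt_nonneg _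
  -- Bernstein's exponent `s / (1 + s / 3)` with `s = √(2L / v) = q / v`
  refine ⟨3 * q / (3 * v + q), by positivity, ?_⟩
  have hl3 : 3 * q / (3 * v + q) < 3 := by rw [div_lt_iff₀ (by positivity)]; linarith
  calc v * (exp (3 * q / (3 * v + q)) - 1 - 3 * q / (3 * v + q))
      ≤ v * ((3 * q / (3 * v + q)) ^ 2 / 2 * (1 - 3 * q / (3 * v + q) / 3)⁻¹) := by
        gcongr; exact exp_sub_one_sub_le (by positivity) hl3
    _ = _ := by
        field_simp
        linear_combination (-9 * v) * hq

section

variable {Ω : Type*} [MeasurableSpace Ω] {μ : Measure Ω} [IsProbabilityMeasure μ]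

lemma mgf_le_exp_variance_mul {Y : Ω → ℝ} (hY : AEMeasurable Y μ) (hbdd : ∀ᵐ ω ∂μ, |Y ω| ≤ 1)
    (hmean : μ[Y] = 0) {l : ℝ} (hl : 0 ≤ l) :
    mgf Y μ l ≤ exp (Var[Y; μ] * (exp l - 1 - l)) := by
  have hint : Integrable Y μ := .of_bound hY.aestronglyMeasurable 1 (by simpa using hbdd)
  have hint2 : Integrable (fun ω => Y ω ^ 2) μ :=
    .of_bound (hY.pow_const 2).aestronglyMeasurable 1 (by
      filter_upwards [hbdd] with ω h
      simpa [abs_pow] using h)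
  have hexp : Integrable (fun ω => exp (l * Y ω)) μ :=
    integrable_exp_mul_of_le l 1 hl hY (hbdd.mono fun ω h => (abs_le.1 h).2)
  have hlin : Integrable (fun ω => 1 + l * Y ω) μ := (integrable_const 1).add (hint.const_mul l)
  calc mgf Y μ l ≤ ∫ ω, (1 + l * Y ω + Y ω ^ 2 * (exp l - 1 - l)) ∂μ :=
        integral_mono_ae hexp (hlin.add (hint2.mul_const _))
          (by filter_upwards [hbdd] with ω h using exp_mul_le_of_abs_le_one hl h)
    _ = 1 + Var[Y; μ] * (exp l - 1 - l) := by
        rw [integral_add hlin (hint2.mul_const _),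
          integral_add (integrable_const 1) (hint.const_mul l), integral_const_mul,
          integral_mul_const, hmean, variance_of_integral_eq_zero hY hmean]
        simp
    _ ≤ exp (Var[Y; μ] * (exp l - 1 - l)) := by
        linarith [add_one_le_exp (Var[Y; μ] * (exp l - 1 - l))]

lemma one_le_mgf_of_integral_eq_zero {Y : Ω → ℝ} (hint : Integrable Y μ) (hmean : μ[Y] = 0)
    {l : ℝ} (hexp : Integrable (fun ω => exp (l * Y ω)) μ) : 1 ≤ mgf Y μ l :=
  calc (1 : ℝ) = ∫ ω, (1 + l * Y ω) ∂μ := by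
        rw [integral_add (integrable_const 1) (hint.const_mul l), integral_const_mul, hmean]; simp
    _ ≤ mgf Y μ l := integral_mono ((integrable_const 1).add (hint.const_mul l)) hexp
        fun ω => by linarith [add_one_le_exp (l * Y ω)]

lemma submartingale_exp_mul_partialSum {Y : ℕ → Ω → ℝ} (hY : ∀ i, StronglyMeasurable (Y i))
    (hindep : iIndepFun Y μ) (hint : ∀ i, Integrable (Y i) μ) (hmean : ∀ i, μ[Y i] = 0) {l : ℝ}
    (hexp : ∀ i, Integrable (fun ω => exp (l * Y i ω)) μ) :
    Submartingale (fun t ω => exp (l * ∑ i ∈ Icc 1 t, Y i ω)) (Filtration.natural Y hY) μ := by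
  set ℱ := Filtration.natural Y hY
  set M : ℕ → Ω → ℝ := fun t ω => exp (l * ∑ i ∈ Icc 1 t, Y i ω)
  have hM_int (t : ℕ) : Integrable (M t) μ := by
    simpa using hindep.integrable_exp_mul_sum (fun i => (hY i).measurable) (s := Icc 1 t)
      fun i _ => hexp i
  have hM_adapted : StronglyAdapted ℱ M := fun t => by
    have hYt (i : ℕ) (hi : i ≤ t) : Measurable[ℱ t] (Y i) :=
      ((Filtration.stronglyAdapted_natural hY i).mono (ℱ.mono hi)).measurable
    exact (measurable_exp.comp ((Finset.measurable_sum _ fun i hi =>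
      hYt i (mem_Icc.1 hi).2).const_mul l)).stronglyMeasurable
  refine submartingale_nat hM_adapted hM_int fun t => ?_
  set Z := fun ω => exp (l * Y (t + 1) ω)
  have hsplit : M (t + 1) = M t * Z := by
    ext ω
    simp only [M, Z, Pi.mul_apply, ← exp_add, ← mul_add,
      sum_Icc_succ_top (by omega : 1 ≤ t + 1)]
  have hZ_meas : StronglyMeasurable[MeasurableSpace.comap (Y (t + 1)) inferInstance] Z :=
    (measurable_exp.comp ((comap_measurable (Y (t + 1))).const_mul l)).stronglyMeasurable
  have hZ_cond : μ[Z | ℱ t] =ᵐ[μ] fun _ => mgf (Y (t + 1)) μ l :=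
    condExp_indep_eq (hY (t + 1)).measurable.comap_le (ℱ.le t) hZ_meas
      (hindep.indep_comap_natural_of_lt hY (Nat.lt_succ_self t))
  have hpull : μ[M t * Z | ℱ t] =ᵐ[μ] M t * μ[Z | ℱ t] :=
    condExp_mul_of_stronglyMeasurable_left (hM_adapted t) (hsplit ▸ hM_int (t + 1)) (hexp (t + 1))
  have hone := one_le_mgf_of_integral_eq_zero (hint (t + 1)) (hmean (t + 1)) (hexp (t + 1))
  filter_upwards [hpull, hZ_cond] with ω h₁ h₂
  rw [hsplit, h₁, Pi.mul_apply, h₂]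
  exact le_mul_of_one_le_right (exp_pos _).le hone

lemma measure_exists_partialSum_gt_le_prod_mgf {Y : ℕ → Ω → ℝ} (hY : ∀ i, Measurable (Y i))
    (hindep : iIndepFun Y μ) (hint : ∀ i, Integrable (Y i) μ) (hmean : ∀ i, μ[Y i] = 0)
    {l : ℝ} (hl : 0 ≤ l) (hexp : ∀ i, Integrable (fun ω => exp (l * Y i ω)) μ) (b : ℝ) (n : ℕ) :
    μ {ω | ∃ t ∈ Icc 1 n, b < ∑ i ∈ Icc 1 t, Y i ω} ≤
      ENNReal.ofReal (exp (-(l * b)) * ∏ i ∈ Icc 1 n, mgf (Y i) μ l) := by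
  set M : ℕ → Ω → ℝ := fun t ω => exp (l * ∑ i ∈ Icc 1 t, Y i ω)
  have hM := submartingale_exp_mul_partialSum (fun i => (hY i).stronglyMeasurable) hindep hint
    hmean hexp
  set E := {ω | exp (l * b) ≤ (range (n + 1)).sup' nonempty_range_add_one fun t => M t ω}
  have hmax : ENNReal.ofReal (exp (l * b)) * μ E ≤ ENNReal.ofReal (∫ ω in E, M n ω ∂μ) := by
    have := maximal_ineq hM (fun t ω => (exp_pos _).le) (ε := (exp (l * b)).toNNReal) n
    rwa [Real.coe_toNNReal _ (exp_pos _).le] at this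
  have hE : {ω | ∃ t ∈ Icc 1 n, b < ∑ i ∈ Icc 1 t, Y i ω} ⊆ E := by
    rintro ω ⟨t, ht, hbt⟩
    exact le_sup'_of_le (fun t => M t ω) (mem_range.2 (Nat.lt_succ_of_le (mem_Icc.1 ht).2))
      (exp_le_exp.2 (mul_le_mul_of_nonneg_left hbt.le hl))
  have hint_M : ∫ ω in E, M n ω ∂μ ≤ ∏ i ∈ Icc 1 n, mgf (Y i) μ l := by
    calc ∫ ω in E, M n ω ∂μ ≤ ∫ ω, M n ω ∂μ :=
          setIntegral_le_integral (hM.integrable n) (ae_of_all _ fun ω => (exp_pos _).le)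
      _ = mgf (∑ i ∈ Icc 1 n, Y i) μ l := by simp [mgf, M, Finset.sum_apply]
      _ = ∏ i ∈ Icc 1 n, mgf (Y i) μ l := hindep.mgf_sum hY _
  calc μ {ω | ∃ t ∈ Icc 1 n, b < ∑ i ∈ Icc 1 t, Y i ω}
      ≤ ENNReal.ofReal (exp (-(l * b))) * (ENNReal.ofReal (exp (l * b)) * μ E) := by
        rw [← mul_assoc, ← ENNReal.ofReal_mul (exp_pos _).le, ← exp_add, neg_add_cancel, exp_zero,
          ENNReal.ofReal_one, one_mul]
        exact measure_mono hE
    _ ≤ ENNReal.ofReal (exp (-(l * b))) * ENNReal.ofReal (∏ i ∈ Icc 1 n, mgf (Y i) μ l) := by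
        gcongr
        exact hmax.trans (ENNReal.ofReal_le_ofReal hint_M)
    _ = _ := (ENNReal.ofReal_mul (exp_pos _).le).symm

lemma measure_exists_partialSum_gt_bennett {Y : ℕ → Ω → ℝ} (hY : ∀ i, Measurable (Y i))
    (hindep : iIndepFun Y μ) (hbdd : ∀ i, ∀ᵐ ω ∂μ, |Y i ω| ≤ 1) (hmean : ∀ i, μ[Y i] = 0)
    {v : ℝ} (hvar : ∀ i, Var[Y i; μ] ≤ v) (n : ℕ) {L : ℝ} (hL : 0 < L) :
    μ {ω | ∃ t ∈ Icc 1 n, √(2 * n * v * L) + 1 / 3 * L < ∑ i ∈ Icc 1 t, Y i ω} ≤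
      ENNReal.ofReal (exp (-L)) := by
  have hv : 0 ≤ v := (variance_nonneg _ _).trans (hvar 0)
  obtain ⟨l, hl, hkey⟩ := exists_bennett_exponent (mul_nonneg n.cast_nonneg hv) hL
  rw [← mul_assoc] at hkey
  have hint (i : ℕ) : Integrable (Y i) μ :=
    .of_bound (hY i).aestronglyMeasurable 1 (by simpa using hbdd i)
  have hexp (i : ℕ) : Integrable (fun ω => exp (l * Y i ω)) μ :=
    integrable_exp_mul_of_le l 1 hl (hY i).aemeasurable ((hbdd i).mono fun ω h => (abs_le.1 h).2)
  have hmgf : ∏ i ∈ Icc 1 n, mgf (Y i) μ l ≤ exp (n * v * (exp l - 1 - l)) := by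
    calc ∏ i ∈ Icc 1 n, mgf (Y i) μ l ≤ ∏ i ∈ Icc 1 n, exp (v * (exp l - 1 - l)) :=
          prod_le_prod (fun i _ => mgf_nonneg) fun i _ =>
            (mgf_le_exp_variance_mul (hY i).aemeasurable (hbdd i) (hmean i) hl).trans
              (exp_le_exp.2 (mul_le_mul_of_nonneg_right (hvar i)
                (by linarith [add_one_le_exp l])))
      _ = exp (n * v * (exp l - 1 - l)) := by simp [← exp_nat_mul, mul_assoc]
  refine (measure_exists_partialSum_gt_le_prod_mgf hY hindep hint hmean hl hexp _ n).trans
    (ENNReal.ofReal_le_ofReal ?_)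
  calc exp (-(l * (√(2 * n * v * L) + 1 / 3 * L))) * ∏ i ∈ Icc 1 n, mgf (Y i) μ l
      ≤ exp (-(l * (√(2 * n * v * L) + 1 / 3 * L))) * exp (n * v * (exp l - 1 - l)) := by
        gcongr
    _ ≤ exp (-L) := by rw [← exp_add, exp_le_exp]; linarith

lemma measure_exists_abs_partialSum_gt_bennett {Y : ℕ → Ω → ℝ} (hY : ∀ i, Measurable (Y i))
    (hindep : iIndepFun Y μ) (hbdd : ∀ i, ∀ᵐ ω ∂μ, |Y i ω| ≤ 1) (hmean : ∀ i, μ[Y i] = 0)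
    {v : ℝ} (hvar : ∀ i, Var[Y i; μ] ≤ v) (n : ℕ) {L : ℝ} (hL : 0 < L) :
    μ {ω | ∃ t ∈ Icc 1 n, √(2 * n * v * L) + 1 / 3 * L < |∑ i ∈ Icc 1 t, Y i ω|} ≤
      ENNReal.ofReal (2 * exp (-L)) := by
  have hneg := measure_exists_partialSum_gt_bennett (Y := fun i => -Y i) (fun i => (hY i).neg)
    (hindep.comp (fun _ x => -x) fun _ => measurable_neg) (by simpa using hbdd)
    (fun i => by simp [integral_neg, hmean i]) (by simpa [variance_neg] using hvar) n hL
  have hpos := measure_exists_partialSum_gt_bennett hY hindep hbdd hmean hvar n hL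
  calc _ ≤ μ ({ω | ∃ t ∈ Icc 1 n, √(2 * n * v * L) + 1 / 3 * L < ∑ i ∈ Icc 1 t, Y i ω} ∪
          {ω | ∃ t ∈ Icc 1 n, √(2 * n * v * L) + 1 / 3 * L < ∑ i ∈ Icc 1 t, (-Y i) ω}) := by
        refine measure_mono fun ω ⟨t, ht, hlt⟩ => ?_
        rcases lt_abs.1 hlt with h | h
        · exact Or.inl ⟨t, ht, h⟩
        · exact Or.inr ⟨t, ht, by simpa using h⟩
    _ ≤ ENNReal.ofReal (exp (-L)) + ENNReal.ofReal (exp (-L)) :=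
        (measure_union_le _ _).trans (add_le_add hpos hneg)
    _ = ENNReal.ofReal (2 * exp (-L)) := by
        rw [← ENNReal.ofReal_add (exp_pos _).le (exp_pos _).le, two_mul]

end

theorem time_uniform_bennett_iid
    {Ω : Type*} [MeasurableSpace Ω] (μ : Measure Ω) [IsProbabilityMeasure μ]
    (n : ℕ) (X : ℕ → Ω → ℝ) (σ2 : ℝ)
    (hmeas : ∀ i, Measurable (X i))
    (hindep : iIndepFun X μ)
    (hident : ∀ i, μ.map (X i) = μ.map (X 1))
    (hbdd : ∀ i, ∀ᵐ ω ∂μ, X i ω ∈ Set.Icc (0:ℝ) 1)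
    (hvar : variance (X 1) μ = σ2)
    (δ : ℝ) (hδ : 0 < δ) (hδ1 : δ < 1) :
    1 - ENNReal.ofReal δ ≤
      μ {ω | ∀ t ∈ Finset.Icc 1 n,
        |∑ i ∈ Finset.Icc 1 t, (X i ω - ∫ x, X 1 x ∂μ)|
          ≤ Real.sqrt (2 * n * σ2 * Real.log (2/δ)) + (1/3) * Real.log (2/δ)} := by
  set m := ∫ x, X 1 x ∂μ
  set Y : ℕ → Ω → ℝ := fun i ω => X i ω - m
  have hid (i : ℕ) : IdentDistrib (X i) (X 1) μ μ :=
    ⟨(hmeas i).aemeasurable, (hmeas 1).aemeasurable, hident i⟩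
  have hint (i : ℕ) : Integrable (X i) μ := .of_mem_Icc 0 1 (hmeas i).aemeasurable (hbdd i)
  have hm : m ∈ Set.Icc (0 : ℝ) 1 := (convex_Icc 0 1).integral_mem isClosed_Icc (hbdd 1) (hint 1)
  have hY_bdd (i : ℕ) : ∀ᵐ ω ∂μ, |Y i ω| ≤ 1 := (hbdd i).mono fun ω h =>
    abs_sub_le_iff.2 ⟨by linarith [h.2, hm.1], by linarith [h.1, hm.2]⟩
  have hY_mean (i : ℕ) : μ[Y i] = 0 := by
    rw [integral_sub (hint i) (integrable_const m), (hid i).integral_eq]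
    simp [m]
  have hY_var (i : ℕ) : Var[Y i; μ] ≤ σ2 :=
    ((variance_sub_const (hmeas i).aestronglyMeasurable m).trans
      ((hid i).variance_eq.trans hvar)).le
  have hL : 0 < log (2 / δ) := log_pos (by rw [lt_div_iff₀ hδ]; linarith)
  have hbad := measure_exists_abs_partialSum_gt_bennett (fun i => (hmeas i).sub_const m)
    (hindep.comp (fun _ x => x - m) fun _ => measurable_sub_const m) hY_bdd hY_mean hY_var n hL
  rw [exp_neg, exp_log (by positivity), inv_div, mul_div_cancel₀ _ two_ne_zero] at hbad
  rw [tsub_le_iff_right, ← measure_univ (μ := μ)]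
  refine (measure_univ_le_add_compl _).trans
    (add_le_add le_rfl ((measure_mono fun ω hω => ?_).trans hbad))
  simpa only [Set.mem_compl_iff, Set.mem_ofPred_eq, not_forall, not_le, exists_prop] using hω
end
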